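/- Let w ∈ ℝⁿ be nonincreasing (w_1 ≥ w_2 ≥ … ≥ w_n), let x ∈ ℝⁿ, and let σ be a permutation of {1,…,n} that sorts x nondecreasingly, i.e., x_{σ(1)} ≤ x_{σ(2)} ≤ … ≤ x_{σ(n)}. Define g ∈ ℝⁿ by g_{σ(k)} = w_k for k = 1,…,n. Then g is a supergradient of OWA_w at x: for every y ∈ ℝⁿ, OWA_w(y) ≤ OWA_w(x) + ⟨g, y − x⟩. -/

import Mathlib

/-- The vector `y` sorted in nondecreasing order. -/
noncomputable def sortVec {n : ℕ} (y : Fin n → ℝ) : Fin n → ℝ :=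
  y ∘ Tuple.sort y

/-- The ordered weighted average of `y` with weights `w`. -/
noncomputable def OWA {n : ℕ} (w y : Fin n → ℝ) : ℝ :=
  ∑ k, w k * sortVec y k

/-!
With nonincreasing weights, `OWA w y ≤ ∑ k, w k * y (τ k)` for every permutation `τ`
(rearrangement inequality), with equality when `τ` sorts `y`. So `OWA w` is a minimum of linear
forms, and `⟨g, ·⟩` is the one that is active at `x`.
-/

section

variable {n : ℕ}

theorem sum_mul_eq_sum_mul_comp_perm {g w : Fin n → ℝ} {σ : Equiv.Perm (Fin n)}
    (hg : ∀ k, g (σ k) = w k) (v : Fin n → ℝ) :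
    ∑ i, g i * v i = ∑ k, w k * v (σ k) := by
  rw [← Equiv.sum_comp σ]
  simp only [hg]

theorem OWA_eq_sum_mul_comp_of_monotone {x : Fin n → ℝ} {σ : Equiv.Perm (Fin n)}
    (hσ : Monotone (x ∘ σ)) (w : Fin n → ℝ) :
    OWA w x = ∑ k, w k * x (σ k) := by
  have hsort : x ∘ σ = x ∘ Tuple.sort x := Tuple.comp_sort_eq_comp_iff_monotone.mpr hσ
  rw [OWA, sortVec, ← hsort]
  rfl

theorem OWA_le_sum_mul_comp_perm {w : Fin n → ℝ} (hw : Antitone w) (y : Fin n → ℝ)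
    (τ : Equiv.Perm (Fin n)) :
    OWA w y ≤ ∑ k, w k * y (τ k) := by
  have hanti : Antivary w (sortVec y) := hw.antivary (Tuple.monotone_sort y)
  have := hanti.sum_smul_le_sum_smul_comp_perm (σ := (Tuple.sort y)⁻¹ * τ)
  simpa [OWA, sortVec, smul_eq_mul, Function.comp] using this

end

/-- With nonincreasing weights `w`, if `σ` sorts `x` nondecreasingly then the vector
`g` with `g (σ k) = w k` is a supergradient of `OWA w` at `x`:
`OWA w y ≤ OWA w x + ⟨g, y - x⟩` for all `y`. -/
theorem owa_supergradient {n : ℕ} (w : Fin n → ℝ) (hw : Antitone w)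
    (x : Fin n → ℝ) (σ : Equiv.Perm (Fin n)) (hσ : Monotone (x ∘ σ))
    (g : Fin n → ℝ) (hg : ∀ k, g (σ k) = w k) :
    ∀ y : Fin n → ℝ, OWA w y ≤ OWA w x + ∑ i, g i * (y i - x i) := by
  intro y
  have hinner : ∑ i, g i * (y i - x i) = ∑ i, g i * y i - ∑ i, g i * x i := by
    simp only [mul_sub, Finset.sum_sub_distrib]
  rw [hinner, sum_mul_eq_sum_mul_comp_perm hg y, sum_mul_eq_sum_mul_comp_perm hg x,
    ← OWA_eq_sum_mul_comp_of_monotone hσ w]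
  linarith [OWA_le_sum_mul_comp_perm hw y σ]
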